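/- Let A, B be real symmetric positive definite n×n matrices. Then min over U ∈ O(n) of ‖√A − √B·U‖_F² equals Tr(A) + Tr(B) − 2·Tr(√(√A·B·√A)). -/

import Mathlib

open Matrix BigOperators

open Classical in
noncomputable def msqrt {n : ℕ} (M : Matrix (Fin n) (Fin n) ℝ) : Matrix (Fin n) (Fin n) ℝ :=
  if h : M.PosSemidef then
    (h.1.eigenvectorUnitary : Matrix (Fin n) (Fin n) ℝ) *
      diagonal ((↑) ∘ Real.sqrt ∘ h.1.eigenvalues) *
      (star h.1.eigenvectorUnitary : Matrix (Fin n) (Fin n) ℝ)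
  else 0

noncomputable def fnorm {n : ℕ} (A : Matrix (Fin n) (Fin n) ℝ) : ℝ :=
  Real.sqrt (∑ i, ∑ j, (A i j) ^ 2)

/-!
Expanding the square, `‖√A - √B U‖² = tr A + tr B - 2 tr (Uᵀ C)` with `C = √B √A`, so the
problem is to maximise `tr (Uᵀ C)` over orthogonal `U`. Writing the polar decomposition
`C = U₀ S` with `S = √(Cᵀ C) = √(√A B √A)`, we get `tr (Uᵀ C) = tr (V S)` for the orthogonal
`V = Uᵀ U₀`, and `tr (V S) ≤ tr S` because
`2 (tr S - tr (V S)) = ‖(1 - V) √S‖² ≥ 0`. Equality holds at `U = U₀`.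
-/

variable {n : ℕ}

section msqrt

variable {M : Matrix (Fin n) (Fin n) ℝ}

lemma msqrt_eq_of_posSemidef (h : M.PosSemidef) :
    msqrt M = (h.1.eigenvectorUnitary : Matrix (Fin n) (Fin n) ℝ) *
      diagonal (Real.sqrt ∘ h.1.eigenvalues) *
      (star h.1.eigenvectorUnitary : Matrix (Fin n) (Fin n) ℝ) := dif_pos h

lemma posSemidef_msqrt (h : M.PosSemidef) : (msqrt M).PosSemidef := by
  rw [msqrt_eq_of_posSemidef h, star_eq_conjTranspose]
  refine PosSemidef.mul_mul_conjTranspose_same ?_ _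
  exact posSemidef_diagonal_iff.mpr fun i => Real.sqrt_nonneg _

lemma msqrt_mul_self (h : M.PosSemidef) : msqrt M * msqrt M = M := by
  set W : Matrix (Fin n) (Fin n) ℝ := (h.1.eigenvectorUnitary : Matrix (Fin n) (Fin n) ℝ)
  set D := diagonal (Real.sqrt ∘ h.1.eigenvalues)
  have hW : star W * W = 1 := Unitary.coe_star_mul_self _
  have hD : D * D = diagonal (RCLike.ofReal ∘ h.1.eigenvalues) := by
    rw [diagonal_mul_diagonal]
    congr 1
    funext i
    simp [Real.mul_self_sqrt (h.eigenvalues_nonneg i)]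
  conv_rhs => rw [h.1.spectral_theorem, Unitary.conjStarAlgAut_apply]
  calc msqrt M * msqrt M = W * (D * (star W * W) * D) * star W := by
        simp only [msqrt_eq_of_posSemidef h, Matrix.mul_assoc]; rfl
    _ = _ := by rw [hW, Matrix.mul_one, hD]

lemma transpose_msqrt (h : M.PosSemidef) : (msqrt M)ᵀ = msqrt M := by
  simpa [Matrix.IsHermitian] using (posSemidef_msqrt h).1

lemma isUnit_det_msqrt (h : M.PosSemidef) (hdet : IsUnit M.det) : IsUnit (msqrt M).det := by
  rw [← msqrt_mul_self h, det_mul] at hdet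
  exact isUnit_of_mul_isUnit_left hdet

end msqrt

lemma fnorm_sq (M : Matrix (Fin n) (Fin n) ℝ) : fnorm M ^ 2 = (Mᵀ * M).trace := by
  rw [fnorm, Real.sq_sqrt (by positivity), Matrix.trace]
  simp only [Matrix.diag, Matrix.mul_apply, Matrix.transpose_apply]
  rw [Finset.sum_comm]
  simp [sq]

lemma trace_transpose_mul_self_nonneg {m k : Type*} [Fintype m] [Fintype k] (M : Matrix m k ℝ) :
    0 ≤ (Mᵀ * M).trace := by
  simpa using (posSemidef_conjTranspose_mul_self M).trace_nonneg

lemma trace_mul_le_trace_of_orthogonal {V S : Matrix (Fin n) (Fin n) ℝ} (hV : Vᵀ * V = 1)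
    (hS : S.PosSemidef) : (V * S).trace ≤ S.trace := by
  set R := msqrt S
  have hR : Rᵀ = R := transpose_msqrt hS
  have hRR : R * R = S := msqrt_mul_self hS
  have hVS : (V * S).trace = (R * V * R).trace := by
    rw [← hRR, ← Matrix.mul_assoc, trace_mul_comm, Matrix.mul_assoc]
  have hVtS : (R * Vᵀ * R).trace = (V * S).trace := by
    rw [hVS, ← trace_transpose, transpose_mul, transpose_mul, hR, transpose_transpose,
      Matrix.mul_assoc]
  -- `(1 - V)ᵀ (1 - V) = 2 - V - Vᵀ` for orthogonal `V`
  have hsq : 2 * (S.trace - (V * S).trace) = (((1 - V) * R)ᵀ * ((1 - V) * R)).trace := by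
    have : ((1 - V) * R)ᵀ * ((1 - V) * R) = 2 • (R * R) - R * V * R - R * Vᵀ * R := by
      rw [transpose_mul, hR, transpose_sub, transpose_one]
      calc R * (1 - Vᵀ) * ((1 - V) * R) = R * R - R * V * R - R * Vᵀ * R + R * (Vᵀ * V) * R := by
            noncomm_ring
        _ = _ := by rw [hV]; noncomm_ring
    rw [this, trace_sub, trace_sub, trace_smul, hVtS, ← hVS, hRR]
    simp only [nsmul_eq_mul, Nat.cast_ofNat]
    ring
  linarith [trace_transpose_mul_self_nonneg ((1 - V) * R)]

lemma exists_orthogonal_mul_msqrt_eq {C : Matrix (Fin n) (Fin n) ℝ} (hC : IsUnit C.det) :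
    ∃ U : Matrix (Fin n) (Fin n) ℝ, Uᵀ * U = 1 ∧ U * msqrt (Cᵀ * C) = C := by
  have hCC : (Cᵀ * C).PosSemidef := by
    simpa using posSemidef_conjTranspose_mul_self C
  set S := msqrt (Cᵀ * C)
  have hS : IsUnit S.det := isUnit_det_msqrt hCC (by simpa using hC.mul hC)
  have hSS : S * S = Cᵀ * C := msqrt_mul_self hCC
  refine ⟨C * S⁻¹, ?_, by rw [Matrix.mul_assoc, nonsing_inv_mul S hS, Matrix.mul_one]⟩
  calc (C * S⁻¹)ᵀ * (C * S⁻¹) = S⁻¹ * (Cᵀ * C) * S⁻¹ := by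
        rw [transpose_mul, transpose_nonsing_inv, transpose_msqrt hCC]; noncomm_ring
    _ = (S⁻¹ * S) * (S * S⁻¹) := by rw [← hSS]; noncomm_ring
    _ = 1 := by rw [nonsing_inv_mul S hS, mul_nonsing_inv S hS, Matrix.mul_one]

lemma fnorm_sub_mul_orthogonal_sq {X Y U : Matrix (Fin n) (Fin n) ℝ} (hX : Xᵀ = X) (hY : Yᵀ = Y)
    (hU : Uᵀ * U = 1) :
    fnorm (X - Y * U) ^ 2 = (X * X).trace + (Y * Y).trace - 2 * (Uᵀ * (Y * X)).trace := by
  have hUUt : U * Uᵀ = 1 := mul_eq_one_comm.mp hU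
  have hcross : (X * (Y * U)).trace = (Uᵀ * (Y * X)).trace := by
    rw [← trace_transpose, transpose_mul, transpose_mul, hX, hY, Matrix.mul_assoc]
  have hconj : (Uᵀ * (Y * Y) * U).trace = (Y * Y).trace := by
    rw [trace_mul_comm, ← Matrix.mul_assoc, hUUt, Matrix.one_mul]
  have hexp : (X - Y * U)ᵀ * (X - Y * U) =
      X * X - X * (Y * U) - Uᵀ * (Y * X) + Uᵀ * (Y * Y) * U := by
    rw [transpose_sub, transpose_mul, hX, hY]; noncomm_ring
  rw [fnorm_sq, hexp, trace_add, trace_sub, trace_sub, hcross, hconj]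
  ring

theorem stmt_5 {n : ℕ} (A B : Matrix (Fin n) (Fin n) ℝ)
    (hA : A.PosDef) (hB : B.PosDef) :
    sInf {d : ℝ | ∃ U : Matrix (Fin n) (Fin n) ℝ, Uᵀ * U = 1 ∧
        d = (fnorm (msqrt A - msqrt B * U)) ^ 2} =
    A.trace + B.trace - 2 * (msqrt (msqrt A * B * msqrt A)).trace := by
  have hsA := transpose_msqrt hA.posSemidef
  have hsB := transpose_msqrt hB.posSemidef
  set C := msqrt B * msqrt A
  have hCtC : Cᵀ * C = msqrt A * B * msqrt A := by
    rw [transpose_mul, hsA, hsB, Matrix.mul_assoc, ← Matrix.mul_assoc (msqrt B),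
      msqrt_mul_self hB.posSemidef, Matrix.mul_assoc]
  have hC : IsUnit C.det := by
    rw [det_mul]
    exact (isUnit_det_msqrt hB.posSemidef ((isUnit_iff_isUnit_det _).mp hB.isUnit)).mul
      (isUnit_det_msqrt hA.posSemidef ((isUnit_iff_isUnit_det _).mp hA.isUnit))
  have hCC : (Cᵀ * C).PosSemidef := by simpa using posSemidef_conjTranspose_mul_self C
  have hnorm U (hU : Uᵀ * U = 1) :
      fnorm (msqrt A - msqrt B * U) ^ 2 = A.trace + B.trace - 2 * (Uᵀ * C).trace := by
    rw [fnorm_sub_mul_orthogonal_sq hsA hsB hU, msqrt_mul_self hA.posSemidef,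
      msqrt_mul_self hB.posSemidef]
  obtain ⟨U₀, hU₀, hpolar⟩ := exists_orthogonal_mul_msqrt_eq hC
  have hU₀C : U₀ᵀ * C = msqrt (Cᵀ * C) := by
    conv_lhs => rw [← hpolar]
    rw [← Matrix.mul_assoc, hU₀, Matrix.one_mul]
  rw [← hCtC]
  refine IsLeast.csInf_eq ⟨⟨U₀, hU₀, by rw [hnorm U₀ hU₀, hU₀C]⟩, ?_⟩
  rintro d ⟨U, hU, rfl⟩
  have hV : (Uᵀ * U₀)ᵀ * (Uᵀ * U₀) = 1 := by
    rw [transpose_mul, transpose_transpose, Matrix.mul_assoc, ← Matrix.mul_assoc U,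
      mul_eq_one_comm.mp hU, Matrix.one_mul, hU₀]
  have hle := trace_mul_le_trace_of_orthogonal hV (posSemidef_msqrt hCC)
  rw [Matrix.mul_assoc, hpolar] at hle
  rw [hnorm U hU]
  linarith
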